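/- For all n ≥ 1, the colon ideal (I_n : x₃^q) is contained in I_{n-1}, where I_n = Σ_{a₁+2a₂=n} J₁^{a₁}J₂^{a₂} in k[x₂,x₃]. -/

import Mathlib

/-!
`Iₙ` is the monomial ideal generated by the products of `a₁` factors from `x₂², x₂x₃^q, x₃^{q+1}`
and `a₂` factors `x₃^{2q+1}`, `a₁ + 2a₂ = n`. So if `f x₃^q ∈ Iₙ`, each monomial `m` of `f` has
`x₃^q m` divisible by such a product `g`, and it suffices to find a generator of `I_{n-1}` dividing
`m`. Removing one factor from `g` does this: a factor `x₂x₃^q` or `x₃^{q+1}` absorbs `x₃^q`, a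
factor `x₃^{2q+1}` may be traded for `x₃^{q+1}`, and if `g` is a power of `x₂²` then `x₃^q` played
no role.
-/

noncomputable section
open MvPolynomial

variable {k : Type*} [Field k]

/-- `J₁ = (x₂², x₂x₃^q, x₃^{q+1})` in `T' = k[x₂,x₃]` (variables `X 0 = x₂`, `X 1 = x₃`). -/
def J1 (k : Type*) [Field k] (q : ℕ) : Ideal (MvPolynomial (Fin 2) k) :=
  Ideal.span {X 0 ^ 2, X 0 * X 1 ^ q, X 1 ^ (q + 1)}

/-- `J₂ = (x₃^{2q+1})`. -/
def J2 (k : Type*) [Field k] (q : ℕ) : Ideal (MvPolynomial (Fin 2) k) :=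
  Ideal.span {X 1 ^ (2 * q + 1)}

/-- `Iₙ = Σ_{a₁+2a₂=n} J₁^{a₁} J₂^{a₂}` (so `I₀ = T'`). -/
def filtI (k : Type*) [Field k] (q n : ℕ) : Ideal (MvPolynomial (Fin 2) k) :=
  ⨆ (a : ℕ × ℕ) (_ : a.1 + 2 * a.2 = n), J1 k q ^ a.1 * J2 k q ^ a.2

open scoped Pointwise

namespace MvPolynomial

variable {σ R : Type*} [CommSemiring R]

theorem span_monomial_image_mul_le (A B : Set (σ →₀ ℕ)) :
    Ideal.span ((fun e => monomial e (1 : R)) '' A) *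
        Ideal.span ((fun e => monomial e (1 : R)) '' B) ≤
      Ideal.span ((fun e => monomial e (1 : R)) '' (A + B)) := by
  classical
  rw [Ideal.mul_le]
  intro r hr s hs
  rw [mem_ideal_span_monomial_image] at hr hs ⊢
  intro e he
  obtain ⟨e₁, he₁, e₂, he₂, rfl⟩ := Finset.mem_add.1 (support_mul r s he)
  obtain ⟨a, ha, hae⟩ := hr e₁ he₁
  obtain ⟨b, hb, hbe⟩ := hs e₂ he₂
  exact ⟨a + b, Set.add_mem_add ha hb, add_le_add hae hbe⟩

theorem colon_span_monomial_image_le {A B : Set (σ →₀ ℕ)} (m : σ →₀ ℕ)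
    (h : ∀ e, ∀ a ∈ A, a ≤ e + m → ∃ b ∈ B, b ≤ e) :
    (Ideal.span ((fun e => monomial e (1 : R)) '' A)).colon
        (Ideal.span {monomial m (1 : R)} : Set (MvPolynomial σ R)) ≤
      Ideal.span ((fun e => monomial e (1 : R)) '' B) := by
  intro f hf
  rw [Ideal.mem_colon_span_singleton, mem_ideal_span_monomial_image] at hf
  rw [mem_ideal_span_monomial_image]
  intro e he
  have hem : e + m ∈ (f * monomial m 1).support := by
    simpa [mem_support_iff, coeff_mul_monomial] using he
  obtain ⟨a, ha, hae⟩ := hf _ hem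
  exact h e a ha hae

end MvPolynomial

def expVec (s t : ℕ) : Fin 2 →₀ ℕ := Finsupp.single 0 s + Finsupp.single 1 t

theorem expVec_add_expVec (s t s' t' : ℕ) :
    expVec s t + expVec s' t' = expVec (s + s') (t + t') := by
  simp only [expVec, Finsupp.single_add]
  abel

theorem monomial_expVec (s t : ℕ) : monomial (expVec s t) (1 : k) = X 0 ^ s * X 1 ^ t := by
  rw [X_pow_eq_monomial, X_pow_eq_monomial, monomial_mul, one_mul, expVec]

theorem expVec_le_iff {s t : ℕ} {e : Fin 2 →₀ ℕ} : expVec s t ≤ e ↔ s ≤ e 0 ∧ t ≤ e 1 := by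
  simp [Finsupp.le_def, Fin.forall_fin_two, expVec]

def J1Exps (q : ℕ) : Set (Fin 2 →₀ ℕ) := {expVec 2 0, expVec 1 q, expVec 0 (q + 1)}

-- The exponent of `(x₂²)^{c₁} (x₂x₃^q)^{c₂} (x₃^{q+1})^{c₃} (x₃^{2q+1})^b`.
def filtExps (q n : ℕ) : Set (Fin 2 →₀ ℕ) :=
  {e | ∃ c₁ c₂ c₃ b : ℕ, c₁ + c₂ + c₃ + 2 * b = n ∧
      e = expVec (2 * c₁ + c₂) (q * c₂ + (q + 1) * c₃ + (2 * q + 1) * b)}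

theorem J1_eq_span_monomial (q : ℕ) :
    J1 k q = Ideal.span ((fun e => monomial e (1 : k)) '' J1Exps q) := by
  simp only [J1, J1Exps, Set.image_insert_eq, Set.image_singleton, monomial_expVec, pow_zero, mul_one,
    one_mul, pow_one]

theorem J2_pow_le_span_monomial (q b : ℕ) :
    J2 k q ^ b ≤ Ideal.span ((fun e => monomial e (1 : k)) '' filtExps q (2 * b)) := by
  rw [J2, Ideal.span_singleton_pow, Ideal.span_singleton_le_iff_mem]
  refine Ideal.subset_span ⟨expVec 0 ((2 * q + 1) * b), ⟨0, 0, 0, b, by ring, by simp⟩, ?_⟩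
  simp [monomial_expVec, pow_mul]

theorem J1Exps_add_filtExps_subset (q n : ℕ) :
    J1Exps q + filtExps q n ⊆ filtExps q (n + 1) := by
  rintro _ ⟨g, hg, _, ⟨c₁, c₂, c₃, b, rfl, rfl⟩, rfl⟩
  rcases hg with rfl | rfl | rfl
  · exact ⟨c₁ + 1, c₂, c₃, b, by ring, by simp only [expVec_add_expVec]; congr 1 <;> ring⟩
  · exact ⟨c₁, c₂ + 1, c₃, b, by ring, by simp only [expVec_add_expVec]; congr 1 <;> ring⟩
  · exact ⟨c₁, c₂, c₃ + 1, b, by ring, by simp only [expVec_add_expVec]; congr 1 <;> ring⟩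

theorem J1_pow_mul_J2_pow_le_span_monomial (q a b : ℕ) :
    J1 k q ^ a * J2 k q ^ b ≤
      Ideal.span ((fun e => monomial e (1 : k)) '' filtExps q (a + 2 * b)) := by
  induction a with
  | zero => simpa using J2_pow_le_span_monomial q b
  | succ a ih =>
    calc J1 k q ^ (a + 1) * J2 k q ^ b = J1 k q * (J1 k q ^ a * J2 k q ^ b) := by ring
      _ ≤ _ := Ideal.mul_mono (J1_eq_span_monomial q).le ih
      _ ≤ _ := span_monomial_image_mul_le _ _
      _ ≤ _ := Ideal.span_mono (Set.image_mono (J1Exps_add_filtExps_subset q _))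
      _ = _ := by rw [add_right_comm]

theorem monomial_mem_filtI {q n : ℕ} {e : Fin 2 →₀ ℕ} (he : e ∈ filtExps q n) :
    monomial e (1 : k) ∈ filtI k q n := by
  obtain ⟨c₁, c₂, c₃, b, rfl, rfl⟩ := he
  have hJ1 : ((X 0 ^ 2 : MvPolynomial (Fin 2) k)) ^ c₁ * (X 0 * X 1 ^ q) ^ c₂ *
      (X 1 ^ (q + 1)) ^ c₃ ∈ J1 k q ^ (c₁ + c₂ + c₃) := by
    rw [pow_add, pow_add]
    refine Ideal.mul_mem_mul (Ideal.mul_mem_mul ?_ ?_) ?_ <;>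
      exact Ideal.pow_mem_pow (Ideal.subset_span (by simp)) _
  have hJ2 : ((X 1 ^ (2 * q + 1) : MvPolynomial (Fin 2) k)) ^ b ∈ J2 k q ^ b :=
    Ideal.pow_mem_pow (Ideal.mem_span_singleton_self _) _
  refine Submodule.mem_iSup_of_mem (c₁ + c₂ + c₃, b) (Submodule.mem_iSup_of_mem rfl ?_)
  convert Ideal.mul_mem_mul hJ1 hJ2 using 1
  rw [monomial_expVec]
  ring

theorem filtI_eq_span_monomial (q n : ℕ) :
    filtI k q n = Ideal.span ((fun e => monomial e (1 : k)) '' filtExps q n) := by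
  apply le_antisymm
  · refine iSup₂_le fun ab hab => ?_
    simpa [hab] using J1_pow_mul_J2_pow_le_span_monomial (k := k) q ab.1 ab.2
  · rw [Ideal.span_le]
    rintro _ ⟨e, he, rfl⟩
    exact monomial_mem_filtI he

theorem exists_filtExps_pred_le {q n : ℕ} {e g : Fin 2 →₀ ℕ} (hg : g ∈ filtExps q n)
    (hge : g ≤ e + Finsupp.single 1 q) : ∃ g' ∈ filtExps q (n - 1), g' ≤ e := by
  obtain ⟨c₁, c₂, c₃, b, rfl, rfl⟩ := hg
  obtain ⟨hs, ht⟩ : 2 * c₁ + c₂ ≤ e 0 ∧ q * c₂ + (q + 1) * c₃ + (2 * q + 1) * b ≤ e 1 + q := by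
    simpa using expVec_le_iff.1 hge
  suffices ∃ d₁ d₂ d₃ b', d₁ + d₂ + d₃ + 2 * b' = c₁ + c₂ + c₃ + 2 * b - 1 ∧
      2 * d₁ + d₂ ≤ e 0 ∧ q * d₂ + (q + 1) * d₃ + (2 * q + 1) * b' ≤ e 1 by
    obtain ⟨d₁, d₂, d₃, b', hsum, hs', ht'⟩ := this
    exact ⟨_, ⟨d₁, d₂, d₃, b', hsum, rfl⟩, expVec_le_iff.2 ⟨hs', ht'⟩⟩
  rcases c₂ with _ | c₂
  · rcases c₃ with _ | c₃
    · rcases b with _ | b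
      · exact ⟨c₁ - 1, 0, 0, 0, by omega, by omega, by simp⟩
      · refine ⟨c₁, 0, 1, b, by omega, by omega, ?_⟩
        rw [mul_add_one] at ht
        omega
    · refine ⟨c₁, 0, c₃, b, by omega, by omega, ?_⟩
      rw [mul_add_one] at ht
      omega
  · refine ⟨c₁, c₂, c₃, b, by omega, by omega, ?_⟩
    rw [mul_add_one] at ht
    omega

theorem stmt_7_general (q : ℕ) (n : ℕ) :
    (filtI k q n).colon ((Ideal.span {X 1 ^ q} : Ideal (MvPolynomial (Fin 2) k)) : Set (MvPolynomial (Fin 2) k)) ≤ filtI k q (n - 1) := by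
  rw [filtI_eq_span_monomial, filtI_eq_span_monomial, X_pow_eq_monomial]
  exact colon_span_monomial_image_le _ fun _ _ => exists_filtExps_pred_le

/-- for all n ≥ 1, (Iₙ : x₃^q) ⊆ I_{n-1}. -/
theorem stmt_7 (q : ℕ) (hq : 1 ≤ q) (n : ℕ) (hn : 1 ≤ n) :
    (filtI k q n).colon ((Ideal.span {X 1 ^ q} : Ideal (MvPolynomial (Fin 2) k)) : Set (MvPolynomial (Fin 2) k)) ≤ filtI k q (n - 1) :=
  stmt_7_general q n
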